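/- arXiv:2310.18743 — 6 statements merged into one kernel-verified Lean document; each statement's English description precedes it below -/
import Mathlib

section
/- Let X be a real random variable and l: ℝ → ℝ a continuous, increasing, continuously differentiable function such that the families {l(-X-t) : t ∈ ℝ} and {l'(-X-t) : t ∈ ℝ} are uniformly integrable, P(l'(-X-t) > 0) > 0 for all t, and there exist t_l ≤ t_u with E[l(-X-t_u)] ≤ λ and E[l(-X-t_l)] ≥ λ. Then the function g(t) = E[l(-X-t)] - λ is continuous and strictly decreasing on ℝ, and has a unique root t*, which equals inf { t ∈ ℝ : E[l(-X-t)] ≤ λ }. -/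
open MeasureTheory Set Filter

/-!
Each sample path `t ↦ l (-X ω - t)` is antitone and continuous, and the path values are
dominated on bounded `t`-intervals by the (integrable) values at the endpoints; dominated
convergence gives continuity of the expectation. Where `l'(-X ω - t) > 0`, the monotone
function `l` is not locally constant to the right of `-X ω - t`, so the path drops strictly
on a set of positive probability and the expectation is strictly decreasing. The
intermediate value theorem between `t_l` and `t_u` then yields the root, and for a strictly
decreasing function the sublevel set `{t | E[l(-X-t)] ≤ λ}` is the ray `[t*, ∞)`.
-/

theorem Monotone.lt_of_hasDerivAt_ne_zero {f : ℝ → ℝ} {f' a b : ℝ} (hf : Monotone f)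
    (hd : HasDerivAt f f' a) (hf' : f' ≠ 0) (hab : a < b) : f a < f b := by
  obtain ⟨c, hc_ne, hac, hcb⟩ : ∃ c, f c ≠ f a ∧ a < c ∧ c < b :=
    ((hd.eventually_ne hf').filter_mono (nhdsGT_le_nhdsNE a) |>.and
      (Ioo_mem_nhdsGT hab)).exists
  exact ((hf hac.le).lt_of_ne hc_ne.symm).trans_le (hf hcb.le)

section ShiftedIntegral

variable {Ω : Type*} [MeasurableSpace Ω] {μ : Measure Ω} {f : ℝ → ℝ} {Y : Ω → ℝ}

theorem strictAnti_integral_comp_sub (hf : Monotone f) (hdf : Differentiable ℝ f)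
    (hint : ∀ t, Integrable (fun ω => f (Y ω - t)) μ)
    (hpos : ∀ t, μ {ω | deriv f (Y ω - t) ≠ 0} ≠ 0) :
    StrictAnti fun t => ∫ ω, f (Y ω - t) ∂μ := by
  intro s t hst
  have hle : ∀ ω, f (Y ω - t) ≤ f (Y ω - s) := fun ω => hf (by linarith)
  have hsupp : {ω | deriv f (Y ω - t) ≠ 0} ⊆
      Function.support fun ω => f (Y ω - s) - f (Y ω - t) := fun ω hω =>
    sub_ne_zero.mpr (hf.lt_of_hasDerivAt_ne_zero (hdf _).hasDerivAt hω (by linarith)).ne'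
  have hdiff : 0 < ∫ ω, (f (Y ω - s) - f (Y ω - t)) ∂μ := by
    rw [integral_pos_iff_support_of_nonneg (fun ω => sub_nonneg.mpr (hle ω))
      ((hint s).sub (hint t))]
    exact (pos_iff_ne_zero.mpr (hpos t)).trans_le (measure_mono hsupp)
  rw [integral_sub (hint s) (hint t)] at hdiff
  linarith

theorem continuous_integral_comp_sub (hf : Monotone f) (hcf : Continuous f)
    (hint : ∀ t, Integrable (fun ω => f (Y ω - t)) μ) :
    Continuous fun t => ∫ ω, f (Y ω - t) ∂μ := by
  refine continuous_iff_continuousAt.mpr fun t₀ => continuousAt_of_dominated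
    (bound := fun ω => max |f (Y ω - (t₀ + 1))| |f (Y ω - (t₀ - 1))|)
    (Eventually.of_forall fun t => (hint t).aestronglyMeasurable) ?_
    ((hint (t₀ + 1)).abs.sup (hint (t₀ - 1)).abs)
    (Eventually.of_forall fun ω => (hcf.comp (continuous_sub_left (Y ω))).continuousAt)
  filter_upwards [Ioo_mem_nhds (sub_one_lt t₀) (lt_add_one t₀)] with t ht
  exact Eventually.of_forall fun ω =>
    abs_le_max_abs_abs (hf (by linarith [ht.2])) (hf (by linarith [ht.1]))

end ShiftedIntegral

theorem StrictAnti.sInf_setOf_le_eq {φ : ℝ → ℝ} (hφ : StrictAnti φ) {t₀ : ℝ} :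
    sInf {t | φ t ≤ φ t₀} = t₀ := by
  have : {t | φ t ≤ φ t₀} = Ici t₀ := ext fun _ => hφ.le_iff_ge
  rw [this, csInf_Ici]

theorem stmt0_general
    {Ω : Type*} [MeasurableSpace Ω] (P : Measure Ω)
    (X : Ω → ℝ) (l : ℝ → ℝ) (lam : ℝ)
    (hl_mono : Monotone l)
    (hl_diff : ContDiff ℝ 1 l)
    (hUI : UniformIntegrable (fun t : ℝ => fun ω => l (-X ω - t)) 1 P)
    (hpos : ∀ t : ℝ, 0 < P {ω | 0 < deriv l (-X ω - t)})
    (tl tu : ℝ) (htl_le : tl ≤ tu)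
    (hu : ∫ ω, l (-X ω - tu) ∂P ≤ lam)
    (hlg : lam ≤ ∫ ω, l (-X ω - tl) ∂P) :
    Continuous (fun t : ℝ => (∫ ω, l (-X ω - t) ∂P) - lam) ∧
    StrictAnti (fun t : ℝ => (∫ ω, l (-X ω - t) ∂P) - lam) ∧
    (∃! tstar : ℝ, (∫ ω, l (-X ω - tstar) ∂P) - lam = 0) ∧
    (∀ tstar : ℝ, (∫ ω, l (-X ω - tstar) ∂P) - lam = 0 →
      tstar = sInf {t : ℝ | (∫ ω, l (-X ω - t) ∂P) ≤ lam}) := by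
  have hint (t : ℝ) : Integrable (fun ω => l (-X ω - t)) P :=
    memLp_one_iff_integrable.mp (hUI.memLp t)
  have hdl : Differentiable ℝ l := hl_diff.differentiable one_ne_zero
  have hcont : Continuous fun t => (∫ ω, l (-X ω - t) ∂P) - lam :=
    (continuous_integral_comp_sub hl_mono hdl.continuous hint).sub continuous_const
  have hanti : StrictAnti fun t => ∫ ω, l (-X ω - t) ∂P :=
    strictAnti_integral_comp_sub hl_mono hdl hint fun t =>
      ((hpos t).trans_le (measure_mono fun _ hω => ne_of_gt hω)).ne'
  obtain ⟨tstar, -, hroot⟩ := intermediate_value_Icc' htl_le hcont.continuousOn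
    (⟨by linarith, by linarith⟩ : (0 : ℝ) ∈ Icc _ _)
  refine ⟨hcont, fun s t hst => sub_lt_sub_right (hanti hst) lam,
    ⟨tstar, hroot, fun t ht => hanti.injective (by linarith)⟩, fun t₀ ht₀ => ?_⟩
  rw [← sub_eq_zero.mp ht₀, hanti.sInf_setOf_le_eq]

/-- the function g(t) = E[l(-X-t)] - λ is continuous, strictly decreasing,
has a unique root, and that root equals inf { t : E[l(-X-t)] ≤ λ }. -/
theorem stmt0
    {Ω : Type*} [MeasurableSpace Ω] (P : Measure Ω) [IsProbabilityMeasure P]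
    (X : Ω → ℝ) (l : ℝ → ℝ) (lam : ℝ)
    (hl_cont : Continuous l) (hl_mono : Monotone l)
    (hl_diff : ContDiff ℝ 1 l)
    (hUI : UniformIntegrable (fun t : ℝ => fun ω => l (-X ω - t)) 1 P)
    (hUI' : UniformIntegrable (fun t : ℝ => fun ω => deriv l (-X ω - t)) 1 P)
    (hpos : ∀ t : ℝ, 0 < P {ω | 0 < deriv l (-X ω - t)})
    (tl tu : ℝ) (htl_le : tl ≤ tu)
    (hu : ∫ ω, l (-X ω - tu) ∂P ≤ lam)
    (hlg : lam ≤ ∫ ω, l (-X ω - tl) ∂P) :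
    Continuous (fun t : ℝ => (∫ ω, l (-X ω - t) ∂P) - lam) ∧
    StrictAnti (fun t : ℝ => (∫ ω, l (-X ω - t) ∂P) - lam) ∧
    (∃! tstar : ℝ, (∫ ω, l (-X ω - tstar) ∂P) - lam = 0) ∧
    (∀ tstar : ℝ, (∫ ω, l (-X ω - tstar) ∂P) - lam = 0 →
      tstar = sInf {t : ℝ | (∫ ω, l (-X ω - t) ∂P) ≤ lam}) :=
  stmt0_general P X l lam hl_mono hl_diff hUI hpos tl tu htl_le hu hlg
end

section
/- Suppose l: ℝ → ℝ satisfies: for all x ≤ y, l(y) - l(x) ≥ b(y - x) for some b > 0. Let X, Y be random variables such that the functions g_X(t) = E[l(-X-t)] - λ and g_Y(t) = E[l(-Y-t)] - λ are well-defined, continuous, strictly decreasing with unique roots SR(X) and SR(Y), and suppose |g_X(t) - g_Y(t)| ≤ w for all t ∈ ℝ for some finite w. Then |SR(X) - SR(Y)| ≤ w/b. -/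
/-!
The linear growth of `l` makes `g_Y` decrease at rate at least `b`, so
`b |SR(X) - SR(Y)| ≤ |g_Y(SR(X)) - g_Y(SR(Y))| = |g_Y(SR(X)) - g_X(SR(X))| ≤ w`.
-/

open MeasureTheory Real Set

theorem mul_abs_sub_le_abs_sub_of_steep_anti {f : ℝ → ℝ} {b : ℝ}
    (hf : ∀ s t, s ≤ t → b * (t - s) ≤ f s - f t) (s t : ℝ) :
    b * |s - t| ≤ |f s - f t| := by
  wlog hst : s ≤ t generalizing s t
  · rw [abs_sub_comm s, abs_sub_comm (f s)]
    exact this t s (le_of_not_ge hst)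
  rw [abs_sub_comm s, abs_of_nonneg (sub_nonneg.2 hst)]
  exact (hf s t hst).trans (le_abs_self _)

theorem mul_sub_le_integral_sub_integral_of_growth {Ω : Type*} [MeasurableSpace Ω]
    {P : Measure Ω} [IsProbabilityMeasure P] {l : ℝ → ℝ} {b : ℝ}
    (hl : ∀ x y, x ≤ y → b * (y - x) ≤ l y - l x) {Z : Ω → ℝ}
    (hint : ∀ t, Integrable (fun ω => l (-Z ω - t)) P) {s t : ℝ} (hst : s ≤ t) :
    b * (t - s) ≤ (∫ ω, l (-Z ω - s) ∂P) - ∫ ω, l (-Z ω - t) ∂P := by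
  have hpointwise : ∀ ω, b * (t - s) ≤ l (-Z ω - s) - l (-Z ω - t) := fun ω =>
    (hl (-Z ω - t) (-Z ω - s) (by linarith)).trans_eq' (by ring)
  calc b * (t - s) = ∫ _, b * (t - s) ∂P := by simp
    _ ≤ ∫ ω, l (-Z ω - s) - l (-Z ω - t) ∂P :=
      integral_mono (integrable_const _) ((hint s).sub (hint t)) hpointwise
    _ = _ := integral_sub (hint s) (hint t)

theorem stmt1_general
    {Ω : Type*} [MeasurableSpace Ω] (P : Measure Ω) [IsProbabilityMeasure P]
    (X Y : Ω → ℝ) (l : ℝ → ℝ) (lam b w sX sY : ℝ)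
    (hb : 0 < b)
    (hgrowth : ∀ x y : ℝ, x ≤ y → b * (y - x) ≤ l y - l x)
    (hintY : ∀ t : ℝ, Integrable (fun ω => l (-Y ω - t)) P)
    (hrootX : (∫ ω, l (-X ω - sX) ∂P) - lam = 0)
    (hrootY : (∫ ω, l (-Y ω - sY) ∂P) - lam = 0)
    (hw : ∀ t : ℝ, |((∫ ω, l (-X ω - t) ∂P) - lam) - ((∫ ω, l (-Y ω - t) ∂P) - lam)| ≤ w) :
    |sX - sY| ≤ w / b := by
  set gX := fun t => (∫ ω, l (-X ω - t) ∂P) - lam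
  set gY := fun t => (∫ ω, l (-Y ω - t) ∂P) - lam
  have hsteepY : ∀ s t, s ≤ t → b * (t - s) ≤ gY s - gY t := fun s t hst => by
    simpa only [gY, sub_sub_sub_cancel_right] using
      mul_sub_le_integral_sub_integral_of_growth hgrowth hintY hst
  rw [le_div_iff₀' hb]
  calc b * |sX - sY| ≤ |gY sX - gY sY| := mul_abs_sub_le_abs_sub_of_steep_anti hsteepY sX sY
    _ = |gX sX - gY sX| := by
      rw [show gX sX = 0 from hrootX, show gY sY = 0 from hrootY, sub_zero, zero_sub, abs_neg]
    _ ≤ w := hw sX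

/-- if l has b-linear growth, g_X and g_Y are continuous strictly decreasing
with roots SR(X), SR(Y), and |g_X - g_Y| ≤ w uniformly, then |SR(X) - SR(Y)| ≤ w / b. -/
theorem stmt1
    {Ω : Type*} [MeasurableSpace Ω] (P : Measure Ω) [IsProbabilityMeasure P]
    (X Y : Ω → ℝ) (l : ℝ → ℝ) (lam b w sX sY : ℝ)
    (hb : 0 < b)
    (hgrowth : ∀ x y : ℝ, x ≤ y → b * (y - x) ≤ l y - l x)
    (hintX : ∀ t : ℝ, Integrable (fun ω => l (-X ω - t)) P)
    (hintY : ∀ t : ℝ, Integrable (fun ω => l (-Y ω - t)) P)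
    (hcX : Continuous (fun t : ℝ => (∫ ω, l (-X ω - t) ∂P) - lam))
    (hcY : Continuous (fun t : ℝ => (∫ ω, l (-Y ω - t) ∂P) - lam))
    (haX : StrictAnti (fun t : ℝ => (∫ ω, l (-X ω - t) ∂P) - lam))
    (haY : StrictAnti (fun t : ℝ => (∫ ω, l (-Y ω - t) ∂P) - lam))
    (hrootX : (∫ ω, l (-X ω - sX) ∂P) - lam = 0)
    (hrootY : (∫ ω, l (-Y ω - sY) ∂P) - lam = 0)
    (hw : ∀ t : ℝ, |((∫ ω, l (-X ω - t) ∂P) - lam) - ((∫ ω, l (-Y ω - t) ∂P) - lam)| ≤ w) :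
    |sX - sY| ≤ w / b :=
  stmt1_general P X Y l lam b w sX sY hb hgrowth hintY hrootX hrootY hw
end

section
/- Suppose l: ℝ → ℝ is L₁-Lipschitz and satisfies l(y) - l(x) ≥ b(y-x) for y ≥ x with b > 0. Then for random variables X, Y with distributions μ_X, μ_Y (and SR equal to the unique root of the corresponding g-function), |SR_{l,λ}(X) - SR_{l,λ}(Y)| ≤ (L₁/b) W₁(μ_X, μ_Y), where W₁ is the 1-Wasserstein distance. -/
/-!
At the root `t = SR(μ)` of `g_μ`, the growth bound `l y - l x ≥ b (y - x)` makes `g_ν` decrease at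
rate at least `b`, so `b |SR(μ) - SR(ν)| ≤ |g_ν(t) - g_μ(t)|`. The latter is the difference of the
expectations of the `L₁`-Lipschitz function `x ↦ l(-x - t)` under `μ` and `ν`, which every coupling
bounds by `L₁` times its transport cost; hence by `L₁ W₁(μ, ν)`. The growth bound also gives both
measures a finite first moment, so that `W₁(μ, ν)` is finite (the product coupling) rather than the
junk value `(⊤ : ℝ≥0∞).toReal = 0`.
-/

open MeasureTheory Real Set

/-- Optimal transport cost of order p between two measures on ℝ. -/
noncomputable def Tcost (p : ℝ) (μ ν : Measure ℝ) : ENNReal :=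
  ⨅ η ∈ {η : Measure (ℝ × ℝ) | η.map Prod.fst = μ ∧ η.map Prod.snd = ν},
    ∫⁻ q, ENNReal.ofReal (|q.1 - q.2| ^ p) ∂η

/-- p-Wasserstein distance W_p = (T_p)^{1/p}. -/
noncomputable def Wdist (p : ℝ) (μ ν : Measure ℝ) : ℝ :=
  ((Tcost p μ ν) ^ (1 / p)).toReal

/-- Utility-based shortfall risk of a distribution ν on ℝ. -/
noncomputable def SR (l : ℝ → ℝ) (lam : ℝ) (ν : Measure ℝ) : ℝ :=
  sInf {t : ℝ | (∫ x, l (-x - t) ∂ν) ≤ lam}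

open scoped NNReal

section Transport

variable {μ ν : Measure ℝ}

lemma ofReal_abs_integral_sub_le_of_coupling {f : ℝ → ℝ} {K : ℝ≥0} (hf : LipschitzWith K f)
    (hfμ : Integrable f μ) (hfν : Integrable f ν) {η : Measure (ℝ × ℝ)}
    (hη₁ : η.map Prod.fst = μ) (hη₂ : η.map Prod.snd = ν) :
    ENNReal.ofReal |∫ x, f x ∂μ - ∫ x, f x ∂ν| ≤
      K * ∫⁻ q, ENNReal.ofReal (|q.1 - q.2| ^ (1 : ℝ)) ∂η := by
  subst hη₁ hη₂
  have hfst : Integrable (fun q : ℝ × ℝ => f q.1) η := hfμ.comp_measurable measurable_fst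
  have hsnd : Integrable (fun q : ℝ × ℝ => f q.2) η := hfν.comp_measurable measurable_snd
  rw [integral_map measurable_fst.aemeasurable hfμ.aestronglyMeasurable,
    integral_map measurable_snd.aemeasurable hfν.aestronglyMeasurable, ← integral_sub hfst hsnd]
  calc ENNReal.ofReal |∫ q, f q.1 - f q.2 ∂η|
      = ‖∫ q, f q.1 - f q.2 ∂η‖ₑ := (Real.enorm_eq_ofReal_abs _).symm
    _ ≤ ∫⁻ q, ‖f q.1 - f q.2‖ₑ ∂η := enorm_integral_le_lintegral_enorm _
    _ ≤ ∫⁻ q, K * ENNReal.ofReal (|q.1 - q.2| ^ (1 : ℝ)) ∂η := lintegral_mono fun q => by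
        rw [rpow_one, ← Real.enorm_eq_ofReal_abs, ← edist_eq_enorm_sub, ← edist_eq_enorm_sub]
        exact hf q.1 q.2
    _ = K * ∫⁻ q, ENNReal.ofReal (|q.1 - q.2| ^ (1 : ℝ)) ∂η :=
        lintegral_const_mul' _ _ ENNReal.coe_ne_top

lemma ofReal_abs_integral_sub_le_mul_Tcost_one {f : ℝ → ℝ} {K : ℝ≥0} (hK : K ≠ 0)
    (hf : LipschitzWith K f) (hfμ : Integrable f μ) (hfν : Integrable f ν) :
    ENNReal.ofReal |∫ x, f x ∂μ - ∫ x, f x ∂ν| ≤ K * Tcost 1 μ ν := by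
  simp only [Tcost, ENNReal.mul_iInf_of_ne (ENNReal.coe_ne_zero.2 hK) ENNReal.coe_ne_top]
  exact le_iInf₂ fun η hη => ofReal_abs_integral_sub_le_of_coupling hf hfμ hfν hη.1 hη.2

lemma Tcost_one_ne_top [IsProbabilityMeasure μ] [IsProbabilityMeasure ν]
    (hμ : Integrable id μ) (hν : Integrable id ν) : Tcost 1 μ ν ≠ ⊤ := by
  have hprod : Integrable (fun q : ℝ × ℝ => q.1 - q.2) (μ.prod ν) :=
    (hμ.comp_fst ν).sub (hν.comp_snd μ)
  have hle : Tcost 1 μ ν ≤ ∫⁻ q, ENNReal.ofReal (|q.1 - q.2| ^ (1 : ℝ)) ∂(μ.prod ν) :=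
    iInf₂_le (μ.prod ν) ⟨by simp, by simp⟩
  refine ne_top_of_le_ne_top hprod.hasFiniteIntegral.ne (hle.trans_eq ?_)
  simp [Real.enorm_eq_ofReal_abs]

lemma Wdist_one : Wdist 1 μ ν = (Tcost 1 μ ν).toReal := by
  simp [Wdist]

lemma abs_integral_sub_le_mul_Wdist_one [IsProbabilityMeasure μ] [IsProbabilityMeasure ν]
    {f : ℝ → ℝ} {K : ℝ≥0} (hK : K ≠ 0) (hf : LipschitzWith K f)
    (hfμ : Integrable f μ) (hfν : Integrable f ν) (hμ : Integrable id μ) (hν : Integrable id ν) :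
    |∫ x, f x ∂μ - ∫ x, f x ∂ν| ≤ K * Wdist 1 μ ν := by
  have h := ENNReal.toReal_mono (ENNReal.mul_ne_top ENNReal.coe_ne_top (Tcost_one_ne_top hμ hν))
    (ofReal_abs_integral_sub_le_mul_Tcost_one hK hf hfμ hfν)
  rwa [ENNReal.toReal_ofReal (abs_nonneg _), ENNReal.toReal_mul, ENNReal.coe_toReal,
    ← Wdist_one] at h

end Transport

section Shortfall

variable {l : ℝ → ℝ} {b : ℝ}

lemma integrable_id_of_integrable_comp_neg (hb : 0 < b)
    (hgrowth : ∀ x y : ℝ, x ≤ y → b * (y - x) ≤ l y - l x) {ρ : Measure ℝ} [IsFiniteMeasure ρ]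
    (hl : Integrable (fun x => l (-x)) ρ) : Integrable id ρ := by
  refine ((hl.sub (integrable_const (l 0))).const_mul b⁻¹).mono aestronglyMeasurable_id
    (ae_of_all _ fun x => ?_)
  have hbound : b * |x| ≤ |l (-x) - l 0| := by
    rcases le_total x 0 with hx | hx
    · rw [abs_of_nonpos hx]
      simpa using (hgrowth 0 (-x) (by linarith)).trans (le_abs_self _)
    · rw [abs_of_nonneg hx, abs_sub_comm]
      simpa using (hgrowth (-x) 0 (by linarith)).trans (le_abs_self _)
  rwa [norm_mul, norm_inv, Real.norm_of_nonneg hb.le, Real.norm_eq_abs, Real.norm_eq_abs, id,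
    le_inv_mul_iff₀ hb]

lemma mul_sub_le_integral_sub_integral (hgrowth : ∀ x y : ℝ, x ≤ y → b * (y - x) ≤ l y - l x)
    {ν : Measure ℝ} [IsProbabilityMeasure ν] (hint : ∀ t : ℝ, Integrable (fun x => l (-x - t)) ν)
    {s t : ℝ} (hst : s ≤ t) :
    b * (t - s) ≤ (∫ x, l (-x - s) ∂ν) - ∫ x, l (-x - t) ∂ν := by
  rw [← integral_sub (hint s) (hint t)]
  calc b * (t - s) = ∫ _, b * (t - s) ∂ν := by simp
    _ ≤ ∫ x, l (-x - s) - l (-x - t) ∂ν :=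
        integral_mono (integrable_const _) ((hint s).sub (hint t)) fun x => by
          simpa using hgrowth (-x - t) (-x - s) (by linarith)

lemma mul_abs_sub_le_abs_integral_sub (hgrowth : ∀ x y : ℝ, x ≤ y → b * (y - x) ≤ l y - l x)
    {ν : Measure ℝ} [IsProbabilityMeasure ν] (hint : ∀ t : ℝ, Integrable (fun x => l (-x - t)) ν)
    {lam t₀ : ℝ} (hroot : ∫ x, l (-x - t₀) ∂ν = lam) (t : ℝ) :
    b * |t - t₀| ≤ |(∫ x, l (-x - t) ∂ν) - lam| := by
  rcases le_total t₀ t with h | h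
  · have := mul_sub_le_integral_sub_integral hgrowth hint h
    rw [abs_of_nonneg (sub_nonneg.2 h), abs_sub_comm]
    exact (hroot ▸ this).trans (le_abs_self _)
  · have := mul_sub_le_integral_sub_integral hgrowth hint h
    rw [abs_of_nonpos (sub_nonpos.2 h), neg_sub]
    exact (hroot ▸ this).trans (le_abs_self _)

end Shortfall

theorem stmt3_general
    (l : ℝ → ℝ) (lam b L1 : ℝ)
    (hb : 0 < b) (hL1 : 0 < L1)
    (hLip : ∀ x y : ℝ, |l x - l y| ≤ L1 * |x - y|)
    (hgrowth : ∀ x y : ℝ, x ≤ y → b * (y - x) ≤ l y - l x)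
    (μ ν : Measure ℝ) [IsProbabilityMeasure μ] [IsProbabilityMeasure ν]
    (hintμ : ∀ t : ℝ, Integrable (fun x => l (-x - t)) μ)
    (hintν : ∀ t : ℝ, Integrable (fun x => l (-x - t)) ν)
    (hrootμ : (∫ x, l (-x - SR l lam μ) ∂μ) = lam)
    (hrootν : (∫ x, l (-x - SR l lam ν) ∂ν) = lam) :
    |SR l lam μ - SR l lam ν| ≤ L1 / b * Wdist 1 μ ν := by
  set t := SR l lam μ
  have hlip : LipschitzWith L1.toNNReal fun x => l (-x - t) :=
    LipschitzWith.of_dist_le_mul fun x y => by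
      simpa [Real.dist_eq, Real.coe_toNNReal L1 hL1.le, abs_sub_comm x y, neg_add_eq_sub] using
        hLip (-x - t) (-y - t)
  have hid : ∀ (ρ : Measure ℝ) [IsProbabilityMeasure ρ],
      (∀ t : ℝ, Integrable (fun x => l (-x - t)) ρ) → Integrable id ρ := fun ρ _ hint =>
    integrable_id_of_integrable_comp_neg hb hgrowth (by simpa using hint 0)
  have hW := abs_integral_sub_le_mul_Wdist_one (by simpa using hL1) hlip (hintμ t) (hintν t)
    (hid μ hintμ) (hid ν hintν)
  rw [hrootμ, abs_sub_comm, Real.coe_toNNReal L1 hL1.le] at hW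
  rw [div_mul_eq_mul_div, le_div_iff₀ hb, mul_comm]
  exact (mul_abs_sub_le_abs_integral_sub hgrowth hintν hrootν t).trans hW

/-- 1-Wasserstein Lipschitz bound on UBSR for Lipschitz loss functions. -/
theorem stmt3
    (l : ℝ → ℝ) (lam b L1 : ℝ)
    (hb : 0 < b) (hL1 : 0 < L1)
    (hLip : ∀ x y : ℝ, |l x - l y| ≤ L1 * |x - y|)
    (hgrowth : ∀ x y : ℝ, x ≤ y → b * (y - x) ≤ l y - l x)
    (μ ν : Measure ℝ) [IsProbabilityMeasure μ] [IsProbabilityMeasure ν]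
    (hintμ : ∀ t : ℝ, Integrable (fun x => l (-x - t)) μ)
    (hintν : ∀ t : ℝ, Integrable (fun x => l (-x - t)) ν)
    (haμ : StrictAnti (fun t : ℝ => ∫ x, l (-x - t) ∂μ))
    (haν : StrictAnti (fun t : ℝ => ∫ x, l (-x - t) ∂ν))
    (hrootμ : (∫ x, l (-x - SR l lam μ) ∂μ) = lam)
    (hrootν : (∫ x, l (-x - SR l lam ν) ∂ν) = lam) :
    |SR l lam μ - SR l lam ν| ≤ L1 / b * Wdist 1 μ ν :=
  stmt3_general l lam b L1 hb hL1 hLip hgrowth μ ν hintμ hintν hrootμ hrootν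
end

section
/- Let l be convex and let F(·, ξ): Θ → ℝ be μ-strongly concave almost surely (Θ convex). Suppose the UBSR functional SR is monotone, cash-invariant, and convex on the relevant class of random variables. Then the function h(θ) = SR(F(θ, ξ)) is μ-strongly convex on Θ. -/
open MeasureTheory Real Set

theorem riskMeasure_le_sub_of_ae_add_le {Ω : Type*} [MeasurableSpace Ω]
    {P : Measure Ω} {ρ : (Ω → ℝ) → ℝ}
    (hmono : ∀ X Y : Ω → ℝ, (∀ᵐ ω ∂P, X ω ≤ Y ω) → ρ Y ≤ ρ X)
    (hcash : ∀ (X : Ω → ℝ) (m : ℝ), ρ (fun ω => X ω + m) = ρ X - m)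
    {X Z : Ω → ℝ} {c : ℝ} (h : ∀ᵐ ω ∂P, X ω + c ≤ Z ω) :
    ρ Z ≤ ρ X - c :=
  hcash X c ▸ hmono _ Z h

theorem stmt6_general
    {Ω : Type*} [MeasurableSpace Ω] (P : Measure Ω)
    {d : ℕ} (Θ : Set (EuclideanSpace ℝ (Fin d)))
    (μ : ℝ)
    (SRf : (Ω → ℝ) → ℝ)
    (hmono : ∀ X Y : Ω → ℝ, (∀ᵐ ω ∂P, X ω ≤ Y ω) → SRf Y ≤ SRf X)
    (hcash : ∀ (X : Ω → ℝ) (m : ℝ), SRf (fun ω => X ω + m) = SRf X - m)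
    (hconv : ∀ X Y : Ω → ℝ, ∀ α ∈ Set.Icc (0 : ℝ) 1,
      SRf (fun ω => α * X ω + (1 - α) * Y ω) ≤ α * SRf X + (1 - α) * SRf Y)
    (F : EuclideanSpace ℝ (Fin d) → Ω → ℝ)
    (hF : ∀ θ₁ ∈ Θ, ∀ θ₂ ∈ Θ, ∀ α ∈ Set.Icc (0 : ℝ) 1,
      ∀ᵐ ω ∂P, α * F θ₁ ω + (1 - α) * F θ₂ ω + μ * α * (1 - α) / 2 * ‖θ₁ - θ₂‖ ^ 2
        ≤ F (α • θ₁ + (1 - α) • θ₂) ω) :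
    ∀ θ₁ ∈ Θ, ∀ θ₂ ∈ Θ, ∀ α ∈ Set.Icc (0 : ℝ) 1,
      SRf (F (α • θ₁ + (1 - α) • θ₂)) ≤
        α * SRf (F θ₁) + (1 - α) * SRf (F θ₂) - μ * α * (1 - α) / 2 * ‖θ₁ - θ₂‖ ^ 2 := by
  intro θ₁ hθ₁ θ₂ hθ₂ α hα
  calc SRf (F (α • θ₁ + (1 - α) • θ₂))
      ≤ SRf (fun ω => α * F θ₁ ω + (1 - α) * F θ₂ ω) - μ * α * (1 - α) / 2 * ‖θ₁ - θ₂‖ ^ 2 :=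
        riskMeasure_le_sub_of_ae_add_le hmono hcash (hF θ₁ hθ₁ θ₂ hθ₂ α hα)
    _ ≤ α * SRf (F θ₁) + (1 - α) * SRf (F θ₂) - μ * α * (1 - α) / 2 * ‖θ₁ - θ₂‖ ^ 2 :=
        sub_le_sub_right (hconv (F θ₁) (F θ₂) α hα) _

/-- if SR is monotone, cash-invariant and convex, and F(·,ξ) is μ-strongly
concave a.s., then h(θ) = SR(F(θ,ξ)) is μ-strongly convex. -/
theorem stmt6
    {Ω : Type*} [MeasurableSpace Ω] (P : Measure Ω) [IsProbabilityMeasure P]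
    {d : ℕ} (Θ : Set (EuclideanSpace ℝ (Fin d))) (hΘ : Convex ℝ Θ)
    (μ : ℝ) (hμ : 0 < μ)
    (SRf : (Ω → ℝ) → ℝ)
    (hmono : ∀ X Y : Ω → ℝ, (∀ᵐ ω ∂P, X ω ≤ Y ω) → SRf Y ≤ SRf X)
    (hcash : ∀ (X : Ω → ℝ) (m : ℝ), SRf (fun ω => X ω + m) = SRf X - m)
    (hconv : ∀ X Y : Ω → ℝ, ∀ α ∈ Set.Icc (0 : ℝ) 1,
      SRf (fun ω => α * X ω + (1 - α) * Y ω) ≤ α * SRf X + (1 - α) * SRf Y)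
    (F : EuclideanSpace ℝ (Fin d) → Ω → ℝ)
    (hF : ∀ θ₁ ∈ Θ, ∀ θ₂ ∈ Θ, ∀ α ∈ Set.Icc (0 : ℝ) 1,
      ∀ᵐ ω ∂P, α * F θ₁ ω + (1 - α) * F θ₂ ω + μ * α * (1 - α) / 2 * ‖θ₁ - θ₂‖ ^ 2
        ≤ F (α • θ₁ + (1 - α) • θ₂) ω) :
    ∀ θ₁ ∈ Θ, ∀ θ₂ ∈ Θ, ∀ α ∈ Set.Icc (0 : ℝ) 1,
      SRf (F (α • θ₁ + (1 - α) • θ₂)) ≤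
        α * SRf (F θ₁) + (1 - α) * SRf (F θ₂) - μ * α * (1 - α) / 2 * ‖θ₁ - θ₂‖ ^ 2 :=
  stmt6_general P Θ μ SRf hmono hcash hconv F hF
end

section
/- Consider a stochastic recursion with z_n = θ_n − θ*, α_k = c/k with 1 ≤ μc ≤ 3, satisfying ‖z_n‖₂ ≤ |1 − α_n μ| ‖z_{n−1}‖₂ + α_n ‖y_{n−1}‖₂ almost surely, where the noise satisfies E[‖y_{k−1}‖₂ | ℱ_{k−1}] ≤ D̂₁/√(m_k) and E[‖y_{k−1}‖₂² | ℱ_{k−1}] ≤ D̂₂/m_k with batch sizes m_k = k. Then E[‖z_n‖₂²] ≤ 512 c² D̂₁²/(n+1) + (450 E[‖z₀‖₂²] + 64 c² D̂₂ (1 + log n))/(n+1)². -/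
/-!
Conditioning on `ℱ k` turns the cross term `E[Z_k Y_k]` into `E[Z_k E[Y_k | ℱ k]]`, which
is at most `D1 / √(k+1) · ‖Z_k‖₂`; hence `a_k = ‖Z_k‖₂` satisfies
`a_{k+1}² ≤ (β_k a_k + α_k D1/√(k+1))² + α_k² D2/(k+1)`. Since `μc ≥ 1`, the contraction
factor obeys `(k+2) β_k ≤ k+1`, so `T_k = (k+1) a_k` satisfies
`T_{k+1}² ≤ (T_k + a'_k)² + b'_k` with `a'_k = O(1/√k)` and `b'_k = O(1/k)`. The triangle
inequality in `ℝ²` then gives `T_n ≤ T_1 + ∑ a'_k + (∑ b'_k)^{1/2} = O(√n + √(log n))`.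
-/

open MeasureTheory Real ProbabilityTheory

section
variable {Ω : Type*} {m m0 : MeasurableSpace Ω} {P : Measure Ω} [IsProbabilityMeasure P]

lemma integral_le_sqrt_integral_sq {X : Ω → ℝ} (hX : MemLp X 2 P) :
    ∫ ω, X ω ∂P ≤ √(∫ ω, X ω ^ 2 ∂P) := by
  have hvar := variance_nonneg X P
  rw [variance_eq_sub hX, sub_nonneg] at hvar
  exact (le_abs_self _).trans (abs_le_sqrt (by simpa using hvar))

lemma integral_sq_le_of_le_mul_add_mul (hm : m ≤ m0) {X X' Y : Ω → ℝ} {β α d e : ℝ}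
    (hβ : 0 ≤ β) (hα : 0 ≤ α) (hd : 0 ≤ d)
    (hX : 0 ≤ᵐ[P] X) (hX' : 0 ≤ᵐ[P] X') (hY : 0 ≤ᵐ[P] Y)
    (hXm : StronglyMeasurable[m] X) (hYm : AEStronglyMeasurable Y P)
    (hX2 : Integrable (fun ω => X ω ^ 2) P) (hY2 : Integrable (fun ω => Y ω ^ 2) P)
    (hle : ∀ᵐ ω ∂P, X' ω ≤ β * X ω + α * Y ω)
    (hYd : ∀ᵐ ω ∂P, P[Y|m] ω ≤ d)
    (hYe : ∀ᵐ ω ∂P, P[fun ω => Y ω ^ 2|m] ω ≤ e) :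
    ∫ ω, X' ω ^ 2 ∂P ≤ (β * √(∫ ω, X ω ^ 2 ∂P) + α * d) ^ 2 + α ^ 2 * e := by
  have hXL2 : MemLp X 2 P :=
    (memLp_two_iff_integrable_sq (hXm.mono hm).aestronglyMeasurable).2 hX2
  have hYL2 : MemLp Y 2 P := (memLp_two_iff_integrable_sq hYm).2 hY2
  have hXY : Integrable (fun ω => X ω * Y ω) P := hXL2.integrable_mul hYL2
  have hXi : Integrable X P := hXL2.integrable one_le_two
  have hYi : Integrable Y P := hYL2.integrable one_le_two
  set A := ∫ ω, X ω ^ 2 ∂P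
  have cross : ∫ ω, X ω * Y ω ∂P ≤ d * √A := calc
    ∫ ω, X ω * Y ω ∂P = ∫ ω, X ω * P[Y|m] ω ∂P := by
      rw [← integral_condExp hm]
      exact integral_congr_ae (condExp_mul_of_stronglyMeasurable_left hXm hXY hYi)
    _ ≤ ∫ ω, X ω * d ∂P := by
      refine integral_mono_of_nonneg ?_ (hXi.mul_const d) ?_
      · filter_upwards [hX, condExp_nonneg hY] with ω h1 h2 using mul_nonneg h1 h2
      · filter_upwards [hX, hYd] with ω h1 h2 using mul_le_mul_of_nonneg_left h2 h1
    _ = d * ∫ ω, X ω ∂P := by rw [integral_mul_const, mul_comm]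
    _ ≤ d * √A := mul_le_mul_of_nonneg_left (integral_le_sqrt_integral_sq hXL2) hd
  have noise : ∫ ω, Y ω ^ 2 ∂P ≤ e := calc
    ∫ ω, Y ω ^ 2 ∂P = ∫ ω, P[fun ω => Y ω ^ 2|m] ω ∂P := (integral_condExp hm).symm
    _ ≤ ∫ _, e ∂P := integral_mono_ae integrable_condExp (integrable_const e) hYe
    _ = e := by simp
  have hβX : Integrable (fun ω => β ^ 2 * X ω ^ 2 + 2 * β * α * (X ω * Y ω)) P :=
    (hX2.const_mul _).add (hXY.const_mul _)
  calc ∫ ω, X' ω ^ 2 ∂P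
      ≤ ∫ ω, β ^ 2 * X ω ^ 2 + 2 * β * α * (X ω * Y ω) + α ^ 2 * Y ω ^ 2 ∂P := by
        refine integral_mono_of_nonneg (ae_of_all _ fun _ => sq_nonneg _)
          (hβX.add (hY2.const_mul _)) ?_
        filter_upwards [hX', hle] with ω h1 h2
        have := pow_le_pow_left₀ h1 h2 2
        linarith
    _ = β ^ 2 * A + 2 * β * α * ∫ ω, X ω * Y ω ∂P + α ^ 2 * ∫ ω, Y ω ^ 2 ∂P := by
        rw [integral_add hβX (hY2.const_mul _), integral_add (hX2.const_mul _) (hXY.const_mul _),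
          integral_const_mul, integral_const_mul, integral_const_mul]
    _ ≤ β ^ 2 * A + 2 * β * α * (d * √A) + α ^ 2 * e := by gcongr
    _ ≤ (β * √A + α * d) ^ 2 + α ^ 2 * e := by
        rw [add_sq, mul_pow, sq_sqrt (integral_nonneg fun ω => sq_nonneg (X ω))]
        nlinarith [sq_nonneg (α * d)]

end

lemma succ_mul_abs_one_sub_div_le {x r : ℝ} (hx : 2 ≤ x) (hr1 : 1 ≤ r) (hr3 : r ≤ 3) :
    (x + 1) * |1 - r / x| ≤ x := by
  have hx0 : 0 < x := by linarith
  have habs : |1 - r / x| ≤ 1 - 1 / x := by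
    rw [abs_le]
    constructor
    · have : (r + 1) / x ≤ 2 := by rw [div_le_iff₀ hx0]; linarith
      rw [add_div] at this
      linarith
    · have : 1 / x ≤ r / x := by gcongr
      linarith
  calc (x + 1) * |1 - r / x| ≤ (x + 1) * (1 - 1 / x) := by gcongr
    _ = x - 1 / x := by field_simp; ring
    _ ≤ x := by linarith [one_div_pos.2 hx0]

lemma succ_sq_mul_le_of_le {x β c d e A A' : ℝ} (hx : 2 ≤ x) (hβ : 0 ≤ β)
    (hβx : (x + 1) * β ≤ x) (hc : 0 ≤ c) (hd : 0 ≤ d) (he : 0 ≤ e)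
    (h : A' ≤ (β * √A + c / x * d) ^ 2 + (c / x) ^ 2 * e) :
    (x + 1) ^ 2 * A' ≤ (x * √A + 3 / 2 * c * d) ^ 2 + 9 / 4 * c ^ 2 * e := by
  have hcx : (x + 1) * (c / x) ≤ 3 / 2 * c := by
    rw [mul_div_assoc', div_le_iff₀ (by linarith)]
    nlinarith
  have hcx0 : 0 ≤ (x + 1) * (c / x) := by positivity
  calc (x + 1) ^ 2 * A' ≤ (x + 1) ^ 2 * ((β * √A + c / x * d) ^ 2 + (c / x) ^ 2 * e) := by
        gcongr
    _ = ((x + 1) * β * √A + (x + 1) * (c / x) * d) ^ 2 + ((x + 1) * (c / x)) ^ 2 * e := by ring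
    _ ≤ (x * √A + 3 / 2 * c * d) ^ 2 + (3 / 2 * c) ^ 2 * e := by gcongr
    _ = (x * √A + 3 / 2 * c * d) ^ 2 + 9 / 4 * c ^ 2 * e := by ring

lemma le_add_sum_add_sqrt_sum_of_sq_le {T a b : ℕ → ℝ} (hT : ∀ k, 0 ≤ T k)
    (ha : ∀ k, 0 ≤ a k) (hb : ∀ k, 0 ≤ b k)
    (h : ∀ k, T (k + 1) ^ 2 ≤ (T k + a k) ^ 2 + b k) (n : ℕ) :
    T n ≤ T 0 + ∑ k ∈ Finset.range n, a k + √(∑ k ∈ Finset.range n, b k) := by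
  induction n with
  | zero => simp
  | succ n ih =>
    set S := T 0 + ∑ k ∈ Finset.range n, a k
    set B := ∑ k ∈ Finset.range n, b k
    have hS : 0 ≤ S := add_nonneg (hT 0) (Finset.sum_nonneg fun k _ => ha k)
    have hB : 0 ≤ B := Finset.sum_nonneg fun k _ => hb k
    rw [Finset.sum_range_succ, Finset.sum_range_succ, ← add_assoc]
    have hBb : √B ≤ √(B + b n) := sqrt_le_sqrt (by linarith [hb n])
    refine le_of_pow_le_pow_left₀ two_ne_zero
      (add_nonneg (add_nonneg hS (ha n)) (sqrt_nonneg _)) ?_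
    calc T (n + 1) ^ 2 ≤ (T n + a n) ^ 2 + b n := h n
      _ ≤ (S + √B + a n) ^ 2 + b n := by gcongr; linarith [hT n, ha n]
      _ ≤ (S + a n + √(B + b n)) ^ 2 := by
        nlinarith [sq_sqrt hB, sq_sqrt (add_nonneg hB (hb n)), ha n, sqrt_nonneg B]

lemma sum_range_inv_sqrt_succ_le (m : ℕ) :
    ∑ j ∈ Finset.range m, 1 / √(j + 1) ≤ 2 * √m := by
  induction m with
  | zero => simp
  | succ m ih =>
    rw [Finset.sum_range_succ]
    push_cast
    have hm : 0 ≤ (m : ℝ) := m.cast_nonneg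
    have h1 : 0 < √((m : ℝ) + 1) := by positivity
    have key : 2 * √(m : ℝ) * √((m : ℝ) + 1) + 1 ≤ 2 * (m + 1) := by
      rw [mul_assoc, ← sqrt_mul hm]
      have := sqrt_le_sqrt (show (m : ℝ) * (m + 1) ≤ (m + 1 / 2) ^ 2 by nlinarith)
      rw [sqrt_sq (by positivity)] at this
      linarith
    have : 1 / √((m : ℝ) + 1) ≤ 2 * √((m : ℝ) + 1) - 2 * √(m : ℝ) := by
      rw [div_le_iff₀ h1]
      nlinarith [sq_sqrt (show (0 : ℝ) ≤ m + 1 by positivity)]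
    linarith

lemma sum_range_inv_add_two_le_log (m : ℕ) :
    ∑ i ∈ Finset.range m, 1 / ((i : ℝ) + 2) ≤ log (m + 1) := by
  have h := harmonic_le_one_add_log (m + 1)
  simp only [harmonic, Finset.sum_range_succ' _ m, Rat.cast_add, Rat.cast_sum, Rat.cast_inv,
    Rat.cast_natCast] at h
  push_cast at h
  have e : ∀ i : ℕ, ((i : ℝ) + 1 + 1)⁻¹ = 1 / ((i : ℝ) + 2) := fun i => by ring
  simp only [e, inv_one] at h
  linarith

lemma add_two_mul_sqrt_le_of_step {c μ D1 D2 : ℝ} (hc : 0 ≤ c) (hD1 : 0 ≤ D1)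
    (hD2 : 0 ≤ D2) (hμc1 : 1 ≤ μ * c) (hμc3 : μ * c ≤ 3) {A : ℕ → ℝ}
    (hA : ∀ k, 0 ≤ A k)
    (hstep : ∀ k : ℕ, A (k + 1)
      ≤ (|1 - c / (k + 1) * μ| * √(A k) + c / (k + 1) * (D1 / √(k + 1))) ^ 2
        + (c / (k + 1)) ^ 2 * (D2 / (k + 1)))
    (m : ℕ) :
    ((m : ℝ) + 2) * √(A (m + 1))
      ≤ 2 * √(A 1) + 3 * c * D1 * √m + √(9 / 4 * c ^ 2 * D2 * log (m + 1)) := by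
  -- `(x + 1) * β ≤ x` needs `x ≥ 2`, so the rescaled recursion starts at `A 1`.
  set T : ℕ → ℝ := fun i => ((i : ℝ) + 2) * √(A (i + 1)) with hTdef
  set a : ℕ → ℝ := fun i => 3 / 2 * c * (D1 / √((i : ℝ) + 2)) with hadef
  set b : ℕ → ℝ := fun i => 9 / 4 * c ^ 2 * (D2 / ((i : ℝ) + 2)) with hbdef
  have hrec (i : ℕ) : T (i + 1) ^ 2 ≤ (T i + a i) ^ 2 + b i := by
    have hx : (2 : ℝ) ≤ (i : ℝ) + 2 := by linarith [(i.cast_nonneg : (0 : ℝ) ≤ i)]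
    have h := hstep (i + 1)
    rw [show ((i + 1 : ℕ) : ℝ) + 1 = (i : ℝ) + 2 by push_cast; ring,
      show c / ((i : ℝ) + 2) * μ = μ * c / ((i : ℝ) + 2) by ring] at h
    rw [hTdef, mul_pow, sq_sqrt (hA _), show ((i + 1 : ℕ) : ℝ) + 2 = (i : ℝ) + 2 + 1 by
      push_cast; ring]
    exact succ_sq_mul_le_of_le hx (abs_nonneg _) (succ_mul_abs_one_sub_div_le hx hμc1 hμc3) hc
      (by positivity) (by positivity) h
  have hsum_a : ∑ i ∈ Finset.range m, a i ≤ 3 * c * D1 * √m := calc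
    ∑ i ∈ Finset.range m, a i
        ≤ ∑ i ∈ Finset.range m, 3 / 2 * c * D1 * (1 / √((i : ℝ) + 1)) := by
        refine Finset.sum_le_sum fun i _ => ?_
        simp only [hadef]
        rw [mul_one_div, ← mul_div_assoc]
        gcongr
        linarith
    _ ≤ 3 / 2 * c * D1 * (2 * √m) := by
        rw [← Finset.mul_sum]; gcongr; exact sum_range_inv_sqrt_succ_le m
    _ = 3 * c * D1 * √m := by ring
  have hsum_b : ∑ i ∈ Finset.range m, b i ≤ 9 / 4 * c ^ 2 * D2 * log (m + 1) := calc
    ∑ i ∈ Finset.range m, b i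
        = 9 / 4 * c ^ 2 * D2 * ∑ i ∈ Finset.range m, 1 / ((i : ℝ) + 2) := by
        rw [Finset.mul_sum]; congr 1 with i; rw [hbdef]; ring
    _ ≤ 9 / 4 * c ^ 2 * D2 * log (m + 1) := by gcongr; exact sum_range_inv_add_two_le_log m
  calc T m ≤ T 0 + ∑ i ∈ Finset.range m, a i + √(∑ i ∈ Finset.range m, b i) :=
        le_add_sum_add_sqrt_sum_of_sq_le (fun i => by positivity) (fun i => by positivity)
          (fun i => by positivity) hrec m
    _ ≤ 2 * √(A 1) + 3 * c * D1 * √m + √(9 / 4 * c ^ 2 * D2 * log (m + 1)) := by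
        gcongr
        norm_num [hTdef]

lemma sq_mul_le_of_step {c μ D1 D2 : ℝ} (hc : 0 ≤ c) (hD1 : 0 ≤ D1) (hD2 : 0 ≤ D2)
    (hμc1 : 1 ≤ μ * c) (hμc3 : μ * c ≤ 3) {A : ℕ → ℝ} (hA : ∀ k, 0 ≤ A k)
    (hstep : ∀ k : ℕ, A (k + 1)
      ≤ (|1 - c / (k + 1) * μ| * √(A k) + c / (k + 1) * (D1 / √(k + 1))) ^ 2
        + (c / (k + 1)) ^ 2 * (D2 / (k + 1)))
    (m : ℕ) :
    ((m : ℝ) + 2) ^ 2 * A (m + 1)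
      ≤ 512 * c ^ 2 * D1 ^ 2 * (m + 2) + 450 * A 0 + 64 * c ^ 2 * D2 * (1 + log (m + 1)) := by
  have hA1 : A 1 ≤ 8 * A 0 + 2 * c ^ 2 * D1 ^ 2 + c ^ 2 * D2 := by
    have h := hstep 0
    simp only [Nat.cast_zero, zero_add, div_one, sqrt_one] at h
    have hβ : |1 - c * μ| ≤ 2 := abs_le.2 ⟨by linarith, by linarith⟩
    have : (|1 - c * μ| * √(A 0) + c * D1) ^ 2 ≤ (2 * √(A 0) + c * D1) ^ 2 := by gcongr
    nlinarith [sq_sqrt (hA 0), sq_nonneg (2 * √(A 0) - c * D1)]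
  have hlog : 0 ≤ log ((m : ℝ) + 1) := log_nonneg (by simp)
  set p := 2 * √(A 1)
  set q := 3 * c * D1 * √m
  set r := √(9 / 4 * c ^ 2 * D2 * log (m + 1))
  have hp : p ^ 2 = 4 * A 1 := by rw [mul_pow, sq_sqrt (hA 1)]; norm_num
  have hq : q ^ 2 = 9 * c ^ 2 * D1 ^ 2 * m := by rw [mul_pow, sq_sqrt m.cast_nonneg]; ring
  have hr : r ^ 2 = 9 / 4 * c ^ 2 * D2 * log (m + 1) := sq_sqrt (by positivity)
  have hle := pow_le_pow_left₀ (by positivity) (add_two_mul_sqrt_le_of_step hc hD1 hD2 hμc1 hμc3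
    hA hstep m) 2
  rw [mul_pow, sq_sqrt (hA _)] at hle
  nlinarith [sq_nonneg (p - q), sq_nonneg (q - r), sq_nonneg (p - r), hA 0,
    mul_nonneg (mul_nonneg (sq_nonneg c) hD2) hlog]

theorem stmt18_general
    {Ω : Type*} [m0 : MeasurableSpace Ω] (P : Measure Ω) [IsProbabilityMeasure P]
    (ℱ : Filtration ℕ m0)
    (Z Y : ℕ → Ω → ℝ) (c μ D1 D2 : ℝ)
    (hc : 0 < c) (hD1 : 0 < D1) (hD2 : 0 < D2)
    (hμc1 : 1 ≤ μ * c) (hμc3 : μ * c ≤ 3)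
    (hZnn : ∀ n : ℕ, ∀ᵐ ω ∂P, 0 ≤ Z n ω)
    (hYnn : ∀ n : ℕ, ∀ᵐ ω ∂P, 0 ≤ Y n ω)
    (hZadapt : Adapted ℱ Z)
    (hYmeas : ∀ k : ℕ, StronglyMeasurable[ℱ (k + 1)] (Y k))
    (hZint : ∀ n : ℕ, Integrable (fun ω => (Z n ω) ^ 2) P)
    (hYint : ∀ n : ℕ, Integrable (fun ω => (Y n ω) ^ 2) P)
    (hrec : ∀ k : ℕ, 1 ≤ k → ∀ᵐ ω ∂P,
      Z k ω ≤ |1 - (c / k) * μ| * Z (k - 1) ω + (c / k) * Y (k - 1) ω)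
    (hY1 : ∀ k : ℕ, 1 ≤ k →
      ∀ᵐ ω ∂P, (P[Y (k - 1)|ℱ (k - 1)]) ω ≤ D1 / Real.sqrt k)
    (hY2 : ∀ k : ℕ, 1 ≤ k →
      ∀ᵐ ω ∂P, (P[fun ω => (Y (k - 1) ω) ^ 2|ℱ (k - 1)]) ω ≤ D2 / k)
    (n : ℕ) (hn : 1 ≤ n) :
    ∫ ω, (Z n ω) ^ 2 ∂P ≤
      512 * c ^ 2 * D1 ^ 2 / (n + 1) +
      (450 * (∫ ω, (Z 0 ω) ^ 2 ∂P) + 64 * c ^ 2 * D2 * (1 + Real.log n)) / (n + 1) ^ 2 := by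
  obtain ⟨m, rfl⟩ : ∃ m, n = m + 1 := ⟨n - 1, by omega⟩
  have hstep (k : ℕ) : ∫ ω, Z (k + 1) ω ^ 2 ∂P
      ≤ (|1 - c / (k + 1) * μ| * √(∫ ω, Z k ω ^ 2 ∂P)
          + c / (k + 1) * (D1 / √(k + 1))) ^ 2
        + (c / (k + 1)) ^ 2 * (D2 / (k + 1)) :=
    integral_sq_le_of_le_mul_add_mul (ℱ.le k) (abs_nonneg _) (by positivity) (by positivity)
      (hZnn k) (hZnn (k + 1)) (hYnn k) (hZadapt k).stronglyMeasurable
      ((hYmeas k).mono (ℱ.le _)).aestronglyMeasurable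
      (hZint k) (hYint k) (by simpa using hrec (k + 1) (by omega))
      (by simpa using hY1 (k + 1) (by omega)) (by simpa using hY2 (k + 1) (by omega))
  have hrate := sq_mul_le_of_step hc.le hD1.le hD2.le hμc1 hμc3
    (fun k => integral_nonneg fun ω => sq_nonneg (Z k ω)) hstep m
  push_cast
  rw [div_add_div _ _ (by positivity) (by positivity), le_div_iff₀ (by positivity)]
  nlinarith [hrate]

/-- non-asymptotic bound for the stochastic gradient recursion with
step sizes α_k = c/k, batch sizes m_k = k and biased gradient noise. Here `Z n ω`
stands for ‖θ_n - θ*‖₂ and `Y n ω` for the gradient-estimate error norm ‖y_n‖₂. -/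
theorem stmt18
    {Ω : Type*} [m0 : MeasurableSpace Ω] (P : Measure Ω) [IsProbabilityMeasure P]
    (ℱ : Filtration ℕ m0)
    (Z Y : ℕ → Ω → ℝ) (c μ D1 D2 : ℝ)
    (hc : 0 < c) (hμ : 0 < μ) (hD1 : 0 < D1) (hD2 : 0 < D2)
    (hμc1 : 1 ≤ μ * c) (hμc3 : μ * c ≤ 3)
    (hZnn : ∀ n : ℕ, ∀ᵐ ω ∂P, 0 ≤ Z n ω)
    (hYnn : ∀ n : ℕ, ∀ᵐ ω ∂P, 0 ≤ Y n ω)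
    (hZadapt : Adapted ℱ Z)
    (hYmeas : ∀ k : ℕ, StronglyMeasurable[ℱ (k + 1)] (Y k))
    (hZint : ∀ n : ℕ, Integrable (fun ω => (Z n ω) ^ 2) P)
    (hYint : ∀ n : ℕ, Integrable (fun ω => (Y n ω) ^ 2) P)
    (hrec : ∀ k : ℕ, 1 ≤ k → ∀ᵐ ω ∂P,
      Z k ω ≤ |1 - (c / k) * μ| * Z (k - 1) ω + (c / k) * Y (k - 1) ω)
    (hY1 : ∀ k : ℕ, 1 ≤ k →
      ∀ᵐ ω ∂P, (P[Y (k - 1)|ℱ (k - 1)]) ω ≤ D1 / Real.sqrt k)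
    (hY2 : ∀ k : ℕ, 1 ≤ k →
      ∀ᵐ ω ∂P, (P[fun ω => (Y (k - 1) ω) ^ 2|ℱ (k - 1)]) ω ≤ D2 / k)
    (n : ℕ) (hn : 1 ≤ n) :
    ∫ ω, (Z n ω) ^ 2 ∂P ≤
      512 * c ^ 2 * D1 ^ 2 / (n + 1) +
      (450 * (∫ ω, (Z 0 ω) ^ 2 ∂P) + 64 * c ^ 2 * D2 * (1 + Real.log n)) / (n + 1) ^ 2 :=
  stmt18_general (m0 := m0) P ℱ Z Y c μ D1 D2 hc hD1 hD2 hμc1 hμc3 hZnn hYnn hZadapt hYmeas hZint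
    hYint hrec hY1 hY2 n hn
end

section
/- Let Q_{k+1:n} = ∏_{i=k+1}^n |1 − α_i μ| with α_i = c/i and 1 ≤ μc ≤ 3. Then for all 2 ≤ k ≤ n−1, Q_{k+1:n} ≤ (k+1)/(n+1); for k = 1, Q_{2:n} ≤ 4·2/(n+1); and for k = 0, Q_{1:n} ≤ 15/(n+1). -/
/-!
Once `i ≥ 2` the step `a / i` lies in `[1 / i, 2 - 1 / i]` (this is where `1 ≤ a ≤ 3` enters), so
each factor is at most `1 - 1 / i = (i - 1) / i`, and these bounds telescope to `k / n`.
The first factor `|1 - a|` can only be bounded by `2`, which costs the constant in the case `k = 0`.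
-/

open Finset

lemma prod_Icc_one_sub_one_div (k n : ℕ) (hk : 0 < k) (hkn : k ≤ n) :
    ∏ i ∈ Icc (k + 1) n, (1 - 1 / (i : ℝ)) = k / n := by
  induction n, hkn using Nat.le_induction with
  | base => rw [Icc_eq_empty (by omega), prod_empty, div_self (by positivity)]
  | succ n hkn ih =>
    have hn : (n : ℝ) ≠ 0 := by exact_mod_cast (hk.trans_le hkn).ne'
    rw [prod_Icc_succ_top (by omega), ih]
    push_cast
    field_simp
    ring

lemma abs_one_sub_div_le {a x : ℝ} (ha : 1 ≤ a) (hax : a ≤ 2 * x - 1) :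
    |1 - a / x| ≤ 1 - 1 / x := by
  have hx : 0 < x := by linarith
  have hlow : 1 / x ≤ a / x := by gcongr
  have hupp : a / x ≤ 2 - 1 / x := by
    calc a / x ≤ (2 * x - 1) / x := by gcongr
      _ = 2 - 1 / x := by field_simp
  rw [abs_le]
  constructor <;> linarith

lemma prod_Icc_abs_one_sub_div_le {a : ℝ} {k : ℕ} (ha : 1 ≤ a) (hak : a ≤ 2 * k + 1)
    (hk : 0 < k) (n : ℕ) :
    ∏ i ∈ Icc (k + 1) n, |1 - a / i| ≤ ((k : ℝ) + 1) / ((n : ℝ) + 1) := by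
  rcases lt_or_ge n k with hnk | hkn
  · rw [Icc_eq_empty (by omega), prod_empty, one_le_div (by positivity)]
    gcongr
  have hn : (0 : ℝ) < n := by exact_mod_cast hk.trans_le hkn
  have hkn' : (k : ℝ) ≤ n := by exact_mod_cast hkn
  calc ∏ i ∈ Icc (k + 1) n, |1 - a / i| ≤ ∏ i ∈ Icc (k + 1) n, (1 - 1 / (i : ℝ)) := by
        refine prod_le_prod (fun _ _ => abs_nonneg _) fun i hi => abs_one_sub_div_le ha ?_
        have : (k : ℝ) + 1 ≤ i := by exact_mod_cast (mem_Icc.1 hi).1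
        linarith
    _ = k / n := prod_Icc_one_sub_one_div k n hk hkn
    _ ≤ ((k : ℝ) + 1) / ((n : ℝ) + 1) := by
        rw [div_le_div_iff₀ hn (by positivity)]
        linarith

theorem stmt19_general
    (c μ : ℝ)
    (h1 : 1 ≤ μ * c) (h3 : μ * c ≤ 3) (n : ℕ) :
    (∀ k : ℕ, 2 ≤ k → k ≤ n - 1 →
      ∏ i ∈ Finset.Icc (k + 1) n, |1 - (c / (i : ℝ)) * μ| ≤ ((k : ℝ) + 1) / ((n : ℝ) + 1)) ∧
    (∏ i ∈ Finset.Icc 2 n, |1 - (c / (i : ℝ)) * μ| ≤ 4 * 2 / ((n : ℝ) + 1)) ∧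
    (∏ i ∈ Finset.Icc 1 n, |1 - (c / (i : ℝ)) * μ| ≤ 15 / ((n : ℝ) + 1)) := by
  have hstep : ∀ x : ℝ, c / x * μ = μ * c / x := fun x => by ring
  simp only [hstep]
  have htail : ∏ i ∈ Icc 2 n, |1 - μ * c / i| ≤ 2 / ((n : ℝ) + 1) := by
    simpa [one_add_one_eq_two] using
      prod_Icc_abs_one_sub_div_le (k := 1) h1 (by norm_num; linarith) one_pos n
  refine ⟨fun k hk _ => ?_, htail.trans (by gcongr; norm_num), ?_⟩
  · have hk' : (2 : ℝ) ≤ k := by exact_mod_cast hk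
    exact prod_Icc_abs_one_sub_div_le h1 (by linarith) (by omega) n
  rcases Nat.eq_zero_or_pos n with rfl | hn
  · norm_num
  have hfirst : |1 - μ * c / (1 : ℕ)| ≤ 2 := by
    rw [Nat.cast_one, div_one, abs_le]
    constructor <;> linarith
  rw [← mul_prod_Ioc_eq_prod_Icc hn, ← Icc_add_one_left_eq_Ioc]
  calc |1 - μ * c / (1 : ℕ)| * ∏ i ∈ Icc 2 n, |1 - μ * c / i| ≤ 2 * (2 / ((n : ℝ) + 1)) :=
        mul_le_mul hfirst htail (prod_nonneg fun _ _ => abs_nonneg _) zero_le_two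
    _ ≤ 15 / ((n : ℝ) + 1) := by
        rw [← mul_div_assoc]
        gcongr
        norm_num

/-- bounds on the products Q_{k+1:n} = ∏_{i=k+1}^n |1 - α_i μ| with
α_i = c/i and 1 ≤ μc ≤ 3. -/
theorem stmt19
    (c μ : ℝ) (hc : 0 < c) (hμ : 0 < μ)
    (h1 : 1 ≤ μ * c) (h3 : μ * c ≤ 3) (n : ℕ) :
    (∀ k : ℕ, 2 ≤ k → k ≤ n - 1 →
      ∏ i ∈ Finset.Icc (k + 1) n, |1 - (c / (i : ℝ)) * μ| ≤ ((k : ℝ) + 1) / ((n : ℝ) + 1)) ∧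
    (∏ i ∈ Finset.Icc 2 n, |1 - (c / (i : ℝ)) * μ| ≤ 4 * 2 / ((n : ℝ) + 1)) ∧
    (∏ i ∈ Finset.Icc 1 n, |1 - (c / (i : ℝ)) * μ| ≤ 15 / ((n : ℝ) + 1)) :=
  stmt19_general c μ h1 h3 n
end
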